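/- Correctness of pushing a filter inside a fixpoint (rule PF): let φ : Multiset τ → Multiset τ be an additive monoid homomorphism, p : τ → α a function, c : α → Prop a decidable predicate, and F the filter F(D) = D.filter (fun d => c (p d)). Suppose condition (C) holds: for every r and every s ∈ φ({r}), p(s) = p(r). For a multiset R define S_0(R) = dedup(R), S_{n+1}(R) = dedup(R + φ(S_n(R))). If the sequence for R becomes stationary at N (S_{N+1}(R) = S_N(R)) and the sequence for F(R) becomes stationary at M, then F(S_N(R)) = S_M(F(R)). -/
import Mathlib


/-- The fixpoint sequence with duplicate elimination:
`S 0 = dedup R`, `S (n+1) = dedup (R + φ (S n))`. -/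
def fixSeqD {τ : Type*} [DecidableEq τ] (φ : Multiset τ → Multiset τ)
    (R : Multiset τ) : ℕ → Multiset τ
  | 0 => R.dedup
  | n + 1 => (R + φ (fixSeqD φ R n)).dedup

lemma filter_dedup' {τ : Type*} [DecidableEq τ] (q : τ → Prop) [DecidablePred q]
    (D : Multiset τ) : D.dedup.filter q = (D.filter q).dedup := by
  refine (Multiset.Nodup.ext (Multiset.Nodup.filter _ (Multiset.nodup_dedup D))
    (Multiset.nodup_dedup _)).mpr ?_
  intro a
  simp [Multiset.mem_filter, Multiset.mem_dedup, and_comm]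

lemma fix_stat {τ : Type*} [DecidableEq τ] (φ : Multiset τ → Multiset τ)
    (R : Multiset τ) (N : ℕ) (hN : fixSeqD φ R (N + 1) = fixSeqD φ R N) :
    ∀ k, fixSeqD φ R (N + k) = fixSeqD φ R N := by
  intro k
  induction k with
  | zero => rfl
  | succ k ih =>
    show (R + φ (fixSeqD φ R (N + k))).dedup = fixSeqD φ R N
    rw [ih]
    exact hN

/-- Correctness of pushing a filter inside a fixpoint (rule PF): if `φ`
preserves the key `p` of singletons, then filtering the fixpoint of `R` by a
condition on the key equals the fixpoint of the filtered `R`. -/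
theorem push_filter_into_fixpoint {τ : Type*} {α : Type*} [DecidableEq τ]
    (φ : Multiset τ → Multiset τ) (p : τ → α) (c : α → Prop)
    [DecidablePred c]
    (hφ0 : φ 0 = 0) (hφadd : ∀ a b : Multiset τ, φ (a + b) = φ a + φ b)
    (hC : ∀ r : τ, ∀ s ∈ φ {r}, p s = p r)
    (R : Multiset τ) (N M : ℕ)
    (hN : fixSeqD φ R (N + 1) = fixSeqD φ R N)
    (hM : fixSeqD φ (R.filter fun d => c (p d)) (M + 1) =
          fixSeqD φ (R.filter fun d => c (p d)) M) :
    (fixSeqD φ R N).filter (fun d => c (p d)) =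
      fixSeqD φ (R.filter fun d => c (p d)) M := by
  set q : τ → Prop := fun d => c (p d) with hq
  -- φ commutes with filtering
  have hφF : ∀ D : Multiset τ, (φ D).filter q = φ (D.filter q) := by
    intro D
    induction D using Multiset.induction with
    | empty => simp [hφ0]
    | cons r D ih =>
      have hrD : (r ::ₘ D) = {r} + D := by simp
      by_cases h : q r
      · have h1 : Multiset.filter q {r} = {r} := by
          simp [Multiset.filter_singleton, h]
        have h2 : Multiset.filter q (φ {r}) = φ {r} := by
          refine Multiset.filter_eq_self.mpr fun s hs => ?_
          show c (p s)
          rw [hC r s hs]; exact h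
        rw [hrD, hφadd, Multiset.filter_add, Multiset.filter_add, h1, h2, ih, ← hφadd]
      · have h1 : Multiset.filter q {r} = 0 := by
          simp [Multiset.filter_singleton, h]
        have h2 : Multiset.filter q (φ {r}) = 0 := by
          refine Multiset.filter_eq_nil.mpr fun s hs => ?_
          show ¬ c (p s)
          rw [hC r s hs]; exact h
        rw [hrD, hφadd, Multiset.filter_add, Multiset.filter_add, h1, h2, ih, zero_add, zero_add]
  -- filtered sequence equals sequence of filtered R
  have key : ∀ n, (fixSeqD φ R n).filter q = fixSeqD φ (R.filter q) n := by
    intro n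
    induction n with
    | zero => simp [fixSeqD, filter_dedup']
    | succ n ih =>
      rw [fixSeqD, fixSeqD, filter_dedup', Multiset.filter_add, hφF, ih]
  have h1 : fixSeqD φ R (max N M) = fixSeqD φ R N := by
    have := fix_stat φ R N hN (max N M - N)
    rwa [Nat.add_sub_cancel' (le_max_left N M)] at this
  have h2 : fixSeqD φ (R.filter q) (max N M) = fixSeqD φ (R.filter q) M := by
    have := fix_stat φ (R.filter q) M hM (max N M - M)
    rwa [Nat.add_sub_cancel' (le_max_right N M)] at this
  rw [← h1, ← h2, key]
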